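/- Kalman decomposition: Let (A,b,c) be a matrix-centre realization at Y ∈ (ℂ^{n×n})^d on H. Let M := C_{A,c} ⊖ (C_{A,c} ∩ O_{A†,b}^⊥) be the minimal subspace, with orthogonal projection Q₀ : H → M, and define the compressed realization (A⁰,b₀,c₀) on M by A⁰_j(G) := Q₀ A_j(G)|_M for G ∈ ℂ^{n×n}, b₀ := Q₀b, c₀ := Q₀c. Then (A⁰,b₀,c₀) is a minimal matrix-centre realization at Y, and it has the same moments as (A,b,c): b₀^* (A⁰)^ω(G_1,…,G_ℓ) c₀ = b^* A^ω(G_1,…,G_ℓ) c for every word ω and all G_i ∈ ℂ^{n×n}; in particular (A⁰,b₀,c₀) and (A,b,c) are analytically equivalent at Y. -/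

import Mathlib

set_option synthInstance.maxHeartbeats 1000000
set_option maxHeartbeats 1000000
set_option linter.unusedSectionVars false

noncomputable section
namespace MC

/-- Projection onto the `p`-th summand of the Hilbert direct sum of copies of `E`. -/
def projL (ι : Type*) [Fintype ι] (E : Type*) [NormedAddCommGroup E] [InnerProductSpace ℂ E]
    (p : ι) : PiLp 2 (fun _ : ι => E) →L[ℂ] E :=
  PiLp.proj 2 (fun _ : ι => E) p

/-- Inclusion of the `p`-th summand into the Hilbert direct sum of copies of `E`. -/
def inclL (ι : Type*) [Fintype ι] [DecidableEq ι] (E : Type*) [NormedAddCommGroup E]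
    [InnerProductSpace ℂ E] (p : ι) : E →L[ℂ] PiLp 2 (fun _ : ι => E) :=
  (PiLp.continuousLinearEquiv 2 ℂ (fun _ : ι => E)).symm.toContinuousLinearMap.comp
    (ContinuousLinearMap.pi (fun q => if q = p then ContinuousLinearMap.id ℂ E else 0))

variable {E : Type*} [NormedAddCommGroup E] [InnerProductSpace ℂ E]

instance piLpCompleteSpace {ι : Type*} [Fintype ι] [CompleteSpace E] :
    CompleteSpace (PiLp 2 (fun _ : ι => E)) :=
  inferInstance

/-- The `(p,q)` block (an `ν × ν` matrix) of a block matrix indexed by `μ × ν`. -/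
def blk {μ ν : Type*} (Z : Matrix (μ × ν) (μ × ν) ℂ) (p q : μ) : Matrix ν ν ℂ :=
  Matrix.of fun i j => Z (p, i) (q, j)

/-- The ampliation `(id_μ ⊗ A)(Z)` of a map `A : ℂ^{ν×ν} → B(E)` applied to a block
matrix `Z`, acting on the Hilbert direct sum `ℂ^μ ⊗ E`. -/
def amp {μ ν : Type*} [Fintype μ] [DecidableEq μ]
    (A : Matrix ν ν ℂ → (E →L[ℂ] E)) (Z : Matrix (μ × ν) (μ × ν) ℂ) :
    PiLp 2 (fun _ : μ => E) →L[ℂ] PiLp 2 (fun _ : μ => E) :=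
  ∑ p, ∑ q, (inclL μ E p).comp ((A (blk Z p q)).comp (projL μ E q))

/-- The linear pencil `L_A(X) = I - Σ_j (id_μ ⊗ A_j)(X_j)`. -/
def pencil {d : ℕ} {μ ν : Type*} [Fintype μ] [DecidableEq μ]
    (A : Fin d → Matrix ν ν ℂ → (E →L[ℂ] E)) (X : Fin d → Matrix (μ × ν) (μ × ν) ℂ) :
    PiLp 2 (fun _ : μ => E) →L[ℂ] PiLp 2 (fun _ : μ => E) :=
  1 - ∑ j, amp (A j) (X j)

/-- `I_μ ⊗ Y` as a block matrix. -/
def oneKron (μ : Type*) [DecidableEq μ] {ν : Type*} (Y : Matrix ν ν ℂ) :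
    Matrix (μ × ν) (μ × ν) ℂ :=
  Matrix.of fun p q => if p.1 = q.1 then Y p.2 q.2 else 0

/-- Restriction `ℂ^{μ×ν} → ℂ^ν` onto the `p`-th slot. -/
def restrL (μ ν : Type*) [Fintype μ] [Fintype ν] [DecidableEq ν] (p : μ) :
    EuclideanSpace ℂ (μ × ν) →L[ℂ] EuclideanSpace ℂ ν :=
  ∑ i : ν, (EuclideanSpace.proj ((p, i) : μ × ν)).smulRight (EuclideanSpace.single i (1 : ℂ))

/-- The ampliation `I_μ ⊗ b : ℂ^{μ×ν} → ℂ^μ ⊗ E` of `b : ℂ^ν → E`. -/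
def ampVec {μ ν : Type*} [Fintype μ] [DecidableEq μ] [Fintype ν] [DecidableEq ν]
    (b : EuclideanSpace ℂ ν →L[ℂ] E) :
    EuclideanSpace ℂ (μ × ν) →L[ℂ] PiLp 2 (fun _ : μ => E) :=
  ∑ p : μ, (inclL μ E p).comp (b.comp (restrL μ ν p))

/-- The quantized transfer function
`f(X) = (I_μ⊗b)^* L_A(X - I_μ⊗Y)^{-1} (I_μ⊗c)` of a matrix-centre realization,
as an operator on `ℂ^{μ×ν}`. -/
def transfer {d : ℕ} {μ ν : Type*} [Fintype μ] [DecidableEq μ] [Fintype ν] [DecidableEq ν]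
    [CompleteSpace E]
    (A : Fin d → Matrix ν ν ℂ → (E →L[ℂ] E))
    (b c : EuclideanSpace ℂ ν →L[ℂ] E) (Y : Fin d → Matrix ν ν ℂ)
    (X : Fin d → Matrix (μ × ν) (μ × ν) ℂ) :
    EuclideanSpace ℂ (μ × ν) →L[ℂ] EuclideanSpace ℂ (μ × ν) :=
  (ContinuousLinearMap.adjoint (ampVec (μ := μ) b)).comp
    ((Ring.inverse (pencil A (fun j => X j - oneKron μ (Y j)))).comp (ampVec c))

/-- The column norm of a `d`-tuple of matrices: the operator norm of the column
`(X_1; …; X_d)`. -/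
def colNorm {d : ℕ} {ι : Type*} [Fintype ι] [DecidableEq ι] (X : Fin d → Matrix ι ι ℂ) : ℝ :=
  ‖LinearMap.toContinuousLinearMap
      (Matrix.toEuclideanLin
        (Matrix.of fun (pq : Fin d × ι) (r : ι) => X pq.1 pq.2 r))‖

/-- The word operator `A^ω(G_1,…,G_ℓ) = A_{i_1}(G_1) ⋯ A_{i_ℓ}(G_ℓ)`, encoded by the
list `[(i_1,G_1),…,(i_ℓ,G_ℓ)]`; the empty word gives the identity. -/
def wordOp {d : ℕ} {ν : Type*}
    (A : Fin d → Matrix ν ν ℂ → (E →L[ℂ] E)) :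
    List (Fin d × Matrix ν ν ℂ) → (E →L[ℂ] E)
  | [] => 1
  | g :: t => (A g.1 g.2) * wordOp A t

/-- The adjoint word operator `A^{ω;†}(G_1,…,G_ℓ) = A_{i_ℓ}(G_ℓ^*)^* ⋯ A_{i_1}(G_1^*)^*`. -/
def wordOpDag {d : ℕ} {ν : Type*} [CompleteSpace E]
    (A : Fin d → Matrix ν ν ℂ → (E →L[ℂ] E))
    (l : List (Fin d × Matrix ν ν ℂ)) : E →L[ℂ] E :=
  ContinuousLinearMap.adjoint (wordOp A (l.map fun g => (g.1, g.2.conjTranspose)))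

/-- The controllable subspace `C_{A,c}`. -/
def ctrlSpace {d : ℕ} {ν : Type*} [Fintype ν]
    (A : Fin d → Matrix ν ν ℂ → (E →L[ℂ] E))
    (c : EuclideanSpace ℂ ν →L[ℂ] E) : Submodule ℂ E :=
  (Submodule.span ℂ {x : E | ∃ l v, x = wordOp A l (c v)}).topologicalClosure

/-- The observable subspace `O_{A†,b}`. -/
def obsSpace {d : ℕ} {ν : Type*} [Fintype ν] [CompleteSpace E]
    (A : Fin d → Matrix ν ν ℂ → (E →L[ℂ] E))
    (b : EuclideanSpace ℂ ν →L[ℂ] E) : Submodule ℂ E :=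
  (Submodule.span ℂ {x : E | ∃ l u, x = wordOpDag A l (b u)}).topologicalClosure

/-- Minimality: controllable and observable. -/
def Minimal {d : ℕ} {ν : Type*} [Fintype ν] [CompleteSpace E]
    (A : Fin d → Matrix ν ν ℂ → (E →L[ℂ] E))
    (b c : EuclideanSpace ℂ ν →L[ℂ] E) : Prop :=
  ctrlSpace A c = ⊤ ∧ obsSpace A b = ⊤

/-- Two matrix-centre realizations at the same centre `Y` are analytically equivalent at `Y`
if on some uniform column-ball about `Y` both pencils are invertible and the quantized
transfer functions agree. -/
def AnalyticEquiv {d n : ℕ} {E F : Type*}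
    [NormedAddCommGroup E] [InnerProductSpace ℂ E] [CompleteSpace E]
    [NormedAddCommGroup F] [InnerProductSpace ℂ F] [CompleteSpace F]
    (A : Fin d → Matrix (Fin n) (Fin n) ℂ → (E →L[ℂ] E))
    (b c : EuclideanSpace ℂ (Fin n) →L[ℂ] E)
    (A' : Fin d → Matrix (Fin n) (Fin n) ℂ → (F →L[ℂ] F))
    (b' c' : EuclideanSpace ℂ (Fin n) →L[ℂ] F)
    (Y : Fin d → Matrix (Fin n) (Fin n) ℂ) : Prop :=
  ∃ r > 0, ∀ m : ℕ, 0 < m → ∀ X : Fin d → Matrix (Fin m × Fin n) (Fin m × Fin n) ℂ,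
    colNorm (fun j => X j - oneKron (Fin m) (Y j)) < r →
      IsUnit (pencil A fun j => X j - oneKron (Fin m) (Y j)) ∧
      IsUnit (pencil A' fun j => X j - oneKron (Fin m) (Y j)) ∧
      transfer A b c Y X = transfer A' b' c' Y X

variable {H : Type*} [NormedAddCommGroup H] [InnerProductSpace ℂ H] [CompleteSpace H]

section Aux
local notation "⟪" x ", " y "⟫" => @inner ℂ _ _ x y

open ContinuousLinearMap in
lemma wordOp_append {d : ℕ} {ν : Type*} (A : Fin d → Matrix ν ν ℂ → (H →L[ℂ] H))
    (s t : List (Fin d × Matrix ν ν ℂ)) :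
    wordOp A (s ++ t) = wordOp A s * wordOp A t := by
  induction s with
  | nil => simp [wordOp]
  | cons g s ih => simp [wordOp, ih, mul_assoc]

lemma wordOpDag_nil {d : ℕ} {ν : Type*} (A : Fin d → Matrix ν ν ℂ → (H →L[ℂ] H)) :
    wordOpDag A ([] : List (Fin d × Matrix ν ν ℂ)) = 1 := by
  simp only [wordOpDag, List.map_nil]
  show ContinuousLinearMap.adjoint (ContinuousLinearMap.id ℂ H) = _
  rw [ContinuousLinearMap.adjoint_id]; rfl

lemma wordOpDag_cons {d : ℕ} {ν : Type*} (A : Fin d → Matrix ν ν ℂ → (H →L[ℂ] H))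
    (g : Fin d × Matrix ν ν ℂ) (t : List (Fin d × Matrix ν ν ℂ)) :
    wordOpDag A (g :: t) =
      (wordOpDag A t).comp (ContinuousLinearMap.adjoint (A g.1 g.2.conjTranspose)) := by
  simp only [wordOpDag, List.map_cons]
  show ContinuousLinearMap.adjoint ((A g.1 g.2.conjTranspose).comp _) = _
  rw [ContinuousLinearMap.adjoint_comp]

lemma wordOpDag_append_single {d : ℕ} {ν : Type*} (A : Fin d → Matrix ν ν ℂ → (H →L[ℂ] H))
    (l : List (Fin d × Matrix ν ν ℂ)) (j : Fin d) (G : Matrix ν ν ℂ) :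
    wordOpDag A (l ++ [(j, G.conjTranspose)]) =
      (ContinuousLinearMap.adjoint (A j G)).comp (wordOpDag A l) := by
  simp only [wordOpDag, List.map_append, List.map_cons, List.map_nil,
    Matrix.conjTranspose_conjTranspose]
  rw [wordOp_append]
  have h1 : wordOp A [(j, G)] = A j G := by simp [wordOp]
  rw [h1]
  show ContinuousLinearMap.adjoint ((wordOp A _).comp (A j G)) = _
  rw [ContinuousLinearMap.adjoint_comp]

variable {d : ℕ} {ν : Type*} [Fintype ν] [DecidableEq ν]
variable {A : Fin d → Matrix ν ν ℂ → (H →L[ℂ] H)}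
variable {b c : EuclideanSpace ℂ ν →L[ℂ] H}

lemma mem_ctrl (l : List (Fin d × Matrix ν ν ℂ)) (v : EuclideanSpace ℂ ν) :
    wordOp A l (c v) ∈ ctrlSpace A c :=
  (Submodule.span ℂ _).le_topologicalClosure (Submodule.subset_span ⟨l, v, rfl⟩)

lemma mem_obs (l : List (Fin d × Matrix ν ν ℂ)) (u : EuclideanSpace ℂ ν) :
    wordOpDag A l (b u) ∈ obsSpace A b :=
  (Submodule.span ℂ _).le_topologicalClosure (Submodule.subset_span ⟨l, u, rfl⟩)

lemma bu_mem_obs (u : EuclideanSpace ℂ ν) : b u ∈ obsSpace A b := by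
  have := mem_obs (A := A) (b := b) [] u
  rwa [wordOpDag_nil] at this

lemma cv_mem_ctrl (v : EuclideanSpace ℂ ν) : c v ∈ ctrlSpace A c :=
  mem_ctrl [] v

lemma ctrl_isClosed : IsClosed ((ctrlSpace A c : Submodule ℂ H) : Set H) :=
  Submodule.isClosed_topologicalClosure _

lemma obs_isClosed : IsClosed ((obsSpace A b : Submodule ℂ H) : Set H) :=
  Submodule.isClosed_topologicalClosure _

/-- Pushing a continuous linear map through a closed span: if generators land in a
closed submodule, so does everything in the closure of the span. -/
lemma map_closure_span_le {S : Set H} {T : H →L[ℂ] H} {K : Submodule ℂ H}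
    (hK : IsClosed (K : Set H)) (h : ∀ x ∈ S, T x ∈ K) :
    ∀ x ∈ (Submodule.span ℂ S).topologicalClosure, T x ∈ K := by
  have hcl : IsClosed ((K.comap (T : H →ₗ[ℂ] H)) : Set H) := by
    have : ((K.comap (T : H →ₗ[ℂ] H)) : Set H) = T ⁻¹' (K : Set H) := rfl
    rw [this]; exact hK.preimage T.continuous
  have hle : (Submodule.span ℂ S).topologicalClosure ≤ K.comap (T : H →ₗ[ℂ] H) :=
    Submodule.topologicalClosure_minimal _ (Submodule.span_le.2 h) hcl
  exact fun x hx => hle hx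

lemma ctrl_invariant (j : Fin d) (G : Matrix ν ν ℂ) :
    ∀ x ∈ ctrlSpace A c, A j G x ∈ ctrlSpace A c := by
  refine map_closure_span_le ctrl_isClosed ?_
  rintro x ⟨l, v, rfl⟩
  exact mem_ctrl ((j, G) :: l) v

lemma obs_invariant (j : Fin d) (G : Matrix ν ν ℂ) :
    ∀ x ∈ obsSpace A b, ContinuousLinearMap.adjoint (A j G) x ∈ obsSpace A b := by
  refine map_closure_span_le obs_isClosed ?_
  rintro x ⟨l, u, rfl⟩
  have := mem_obs (A := A) (b := b) (l ++ [(j, G.conjTranspose)]) u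
  rwa [wordOpDag_append_single] at this

lemma orth_invariant {K : Submodule ℂ H} {T : H →L[ℂ] H}
    (h : ∀ y ∈ K, ContinuousLinearMap.adjoint T y ∈ K) :
    ∀ x ∈ Kᗮ, T x ∈ Kᗮ := by
  intro x hx
  rw [Submodule.mem_orthogonal]
  intro u hu
  have : ⟪ContinuousLinearMap.adjoint T u, x⟫ = ⟪u, T x⟫ :=
    ContinuousLinearMap.adjoint_inner_left T x u
  rw [← this]
  exact (Submodule.mem_orthogonal _ _).1 hx _ (h u hu)

end Aux

section Proj
local notation "⟪" x ", " y "⟫" => @inner ℂ _ _ x y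

variable {d : ℕ} {ν : Type*} [Fintype ν] [DecidableEq ν]
variable {A : Fin d → Matrix ν ν ℂ → (H →L[ℂ] H)}
variable {b c : EuclideanSpace ℂ ν →L[ℂ] H}
variable {Q₀ : H →L[ℂ] H}

lemma Qidem_apply (hQidem : Q₀.comp Q₀ = Q₀) (x : H) : Q₀ (Q₀ x) = Q₀ x := by
  exact ContinuousLinearMap.ext_iff.1 hQidem x

lemma Qsa_inner (hQsa : IsSelfAdjoint Q₀) (x y : H) : ⟪Q₀ x, y⟫ = ⟪x, Q₀ y⟫ :=
  hQsa.isSymmetric x y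

lemma Q_range_eq_self (hQidem : Q₀.comp Q₀ = Q₀) {x : H}
    (hx : x ∈ LinearMap.range (Q₀ : H →ₗ[ℂ] H)) : Q₀ x = x := by
  obtain ⟨y, rfl⟩ := hx; exact Qidem_apply hQidem y

lemma Q_zero_of_inner_range (hQidem : Q₀.comp Q₀ = Q₀) (hQsa : IsSelfAdjoint Q₀) {z : H}
    (h : ∀ m ∈ LinearMap.range (Q₀ : H →ₗ[ℂ] H), ⟪z, m⟫ = 0) : Q₀ z = 0 := by
  have h1 : ⟪Q₀ z, Q₀ z⟫ = 0 := by
    rw [Qsa_inner hQsa, Qidem_apply hQidem]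
    exact h _ ⟨z, rfl⟩
  exact inner_self_eq_zero.1 h1

lemma sub_Q_inner_range (hQidem : Q₀.comp Q₀ = Q₀) (hQsa : IsSelfAdjoint Q₀) (x : H) :
    ∀ m ∈ LinearMap.range (Q₀ : H →ₗ[ℂ] H), ⟪x - Q₀ x, m⟫ = 0 := by
  rintro m ⟨m', rfl⟩
  show ⟪x - Q₀ x, Q₀ m'⟫ = 0
  rw [inner_sub_left, Qsa_inner hQsa, Qidem_apply hQidem, sub_self]

variable (hQidem : Q₀.comp Q₀ = Q₀) (hQsa : IsSelfAdjoint Q₀)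
  (hQran : LinearMap.range (Q₀ : H →ₗ[ℂ] H) =
    ctrlSpace A c ⊓ (ctrlSpace A c ⊓ (obsSpace A b)ᗮ)ᗮ)
include hQidem hQsa hQran

lemma N_le_ker : ∀ z ∈ ctrlSpace A c ⊓ (obsSpace A b)ᗮ, Q₀ z = 0 := by
  intro z hz
  refine Q_zero_of_inner_range hQidem hQsa fun m hm => ?_
  rw [hQran] at hm
  exact (Submodule.mem_orthogonal _ _).1 hm.2 z hz

lemma Corth_le_ker : ∀ z ∈ (ctrlSpace A c)ᗮ, Q₀ z = 0 := by
  intro z hz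
  refine Q_zero_of_inner_range hQidem hQsa fun m hm => ?_
  rw [hQran] at hm
  exact (Submodule.mem_orthogonal' _ _).1 hz m hm.1

lemma sub_mem_N : ∀ x ∈ ctrlSpace A c, x - Q₀ x ∈ ctrlSpace A c ⊓ (obsSpace A b)ᗮ := by
  intro x hx
  set Ns : Submodule ℂ H := ctrlSpace A c ⊓ (obsSpace A b)ᗮ with hNs
  have hQxM : Q₀ x ∈ LinearMap.range (Q₀ : H →ₗ[ℂ] H) := ⟨x, rfl⟩
  have hQxC : Q₀ x ∈ ctrlSpace A c := by
    have := hQxM; rw [hQran] at this; exact this.1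
  have hzC : x - Q₀ x ∈ ctrlSpace A c := sub_mem hx hQxC
  have hNclosed : IsClosed (Ns : Set H) := by
    rw [hNs, Submodule.coe_inf]
    exact IsClosed.inter ctrl_isClosed (Submodule.isClosed_orthogonal _)
  haveI : CompleteSpace Ns := hNclosed.completeSpace_coe
  set z : H := x - Q₀ x with hzdef
  set nz : H := Ns.starProjection z with hnz
  have hnzN : nz ∈ Ns := Ns.starProjection_apply_mem z
  have hr : z - nz ∈ Nsᗮ := Submodule.sub_starProjection_mem_orthogonal z
  have hrC : z - nz ∈ ctrlSpace A c := sub_mem hzC hnzN.1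
  have hrM : z - nz ∈ LinearMap.range (Q₀ : H →ₗ[ℂ] H) := by
    rw [hQran]; exact Submodule.mem_inf.2 ⟨hrC, hr⟩
  have h0 : ⟪z, z - nz⟫ = 0 := sub_Q_inner_range hQidem hQsa x _ hrM
  have h1 : ⟪nz, z - nz⟫ = 0 := (Submodule.mem_orthogonal _ _).1 hr nz hnzN
  have h2 : ⟪z - nz, z - nz⟫ = 0 := by
    have : ⟪z, z - nz⟫ = ⟪nz, z - nz⟫ + ⟪z - nz, z - nz⟫ := by
      rw [← inner_add_left, add_sub_cancel]
    rw [h0, h1, zero_add] at this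
    exact this.symm
  have h3 : z - nz = 0 := inner_self_eq_zero.1 h2
  have : z = nz := by rwa [sub_eq_zero] at h3
  rw [this]; exact hnzN

lemma sub_mem_Corth : ∀ x ∈ obsSpace A b, x - Q₀ x ∈ (ctrlSpace A c)ᗮ := by
  intro x hx
  rw [Submodule.mem_orthogonal']
  intro w hw
  have hsplit : w = (w - Q₀ w) + Q₀ w := (sub_add_cancel w (Q₀ w)).symm
  have hn : w - Q₀ w ∈ ctrlSpace A c ⊓ (obsSpace A b)ᗮ := sub_mem_N hQidem hQsa hQran w hw
  have h2 : ⟪x - Q₀ x, Q₀ w⟫ = 0 :=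
    sub_Q_inner_range hQidem hQsa x _ ⟨w, rfl⟩
  have h1 : ⟪x - Q₀ x, w - Q₀ w⟫ = 0 := by
    rw [inner_sub_left]
    have hxn : ⟪x, w - Q₀ w⟫ = 0 := (Submodule.mem_orthogonal _ _).1 hn.2 x hx
    have hQxn : ⟪Q₀ x, w - Q₀ w⟫ = 0 := by
      rw [Qsa_inner hQsa, N_le_ker hQidem hQsa hQran _ hn, inner_zero_right]
    rw [hxn, hQxn, sub_self]
  calc ⟪x - Q₀ x, w⟫ = ⟪x - Q₀ x, (w - Q₀ w) + Q₀ w⟫ := by rw [← hsplit]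
    _ = ⟪x - Q₀ x, w - Q₀ w⟫ + ⟪x - Q₀ x, Q₀ w⟫ := inner_add_right _ _ _
    _ = 0 := by rw [h1, h2, add_zero]

lemma key_ctrl (j : Fin d) (G : Matrix ν ν ℂ) :
    ∀ x ∈ ctrlSpace A c, Q₀ (A j G x) = Q₀ (A j G (Q₀ x)) := by
  intro x hx
  have hn := sub_mem_N hQidem hQsa hQran x hx
  have hAn : A j G (x - Q₀ x) ∈ ctrlSpace A c ⊓ (obsSpace A b)ᗮ := by
    refine Submodule.mem_inf.2 ⟨ctrl_invariant j G _ hn.1, ?_⟩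
    exact orth_invariant (fun y hy => obs_invariant j G y hy) _ hn.2
  have h0 : Q₀ (A j G (x - Q₀ x)) = 0 := N_le_ker hQidem hQsa hQran _ hAn
  rw [map_sub, map_sub, sub_eq_zero] at h0
  exact h0

lemma key_obs (j : Fin d) (G : Matrix ν ν ℂ) :
    ∀ x ∈ obsSpace A b,
      Q₀ (ContinuousLinearMap.adjoint (A j G) x) =
        Q₀ (ContinuousLinearMap.adjoint (A j G) (Q₀ x)) := by
  intro x hx
  have hz := sub_mem_Corth hQidem hQsa hQran x hx
  have hAz : ContinuousLinearMap.adjoint (A j G) (x - Q₀ x) ∈ (ctrlSpace A c)ᗮ := by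
    refine orth_invariant (fun y hy => ?_) _ hz
    rw [ContinuousLinearMap.adjoint_adjoint]
    exact ctrl_invariant j G y hy
  have h0 : Q₀ (ContinuousLinearMap.adjoint (A j G) (x - Q₀ x)) = 0 :=
    Corth_le_ker hQidem hQsa hQran _ hAz
  rw [map_sub, map_sub, sub_eq_zero] at h0
  exact h0

omit hQsa hQran in
lemma wordOp_comp_mem_range (l : List (Fin d × Matrix ν ν ℂ)) (x : H) :
    wordOp (fun j G => Q₀.comp ((A j G).comp Q₀)) l (Q₀ x) ∈ LinearMap.range (Q₀ : H →ₗ[ℂ] H) := by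
  cases l with
  | nil => exact ⟨x, rfl⟩
  | cons g t => exact ⟨_, rfl⟩

lemma wordOp_compress (l : List (Fin d × Matrix ν ν ℂ)) (v : EuclideanSpace ℂ ν) :
    Q₀ (wordOp A l (c v)) =
      wordOp (fun j G => Q₀.comp ((A j G).comp Q₀)) l (Q₀ (c v)) := by
  induction l with
  | nil => rfl
  | cons g t ih =>
    have h1 : wordOp A (g :: t) (c v) = A g.1 g.2 (wordOp A t (c v)) := rfl
    rw [h1, key_ctrl hQidem hQsa hQran g.1 g.2 _ (mem_ctrl t v), ih,
      ← Q_range_eq_self hQidem (wordOp_comp_mem_range hQidem t (c v))]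
    rfl

omit hQran hQidem in
lemma adjoint_comp_Q (j : Fin d) (G : Matrix ν ν ℂ) :
    ContinuousLinearMap.adjoint (Q₀.comp ((A j G).comp Q₀)) =
      Q₀.comp ((ContinuousLinearMap.adjoint (A j G)).comp Q₀) := by
  rw [ContinuousLinearMap.adjoint_comp, ContinuousLinearMap.adjoint_comp, hQsa.adjoint_eq]
  rfl

omit hQran in
lemma wordOpDag_comp_mem_range (l : List (Fin d × Matrix ν ν ℂ)) (x : H) :
    wordOpDag (fun j G => Q₀.comp ((A j G).comp Q₀)) l (Q₀ x) ∈ LinearMap.range (Q₀ : H →ₗ[ℂ] H) := by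
  induction l generalizing x with
  | nil => rw [wordOpDag_nil]; exact ⟨x, rfl⟩
  | cons g t ih =>
    rw [wordOpDag_cons]
    have h1 : ((wordOpDag (fun j G => Q₀.comp ((A j G).comp Q₀)) t).comp
        (ContinuousLinearMap.adjoint
          ((fun j G => Q₀.comp ((A j G).comp Q₀)) g.1 g.2.conjTranspose))) (Q₀ x) =
        wordOpDag (fun j G => Q₀.comp ((A j G).comp Q₀)) t
          (Q₀ ((ContinuousLinearMap.adjoint (A g.1 g.2.conjTranspose)) (Q₀ (Q₀ x)))) := by
      rw [ContinuousLinearMap.comp_apply, adjoint_comp_Q hQsa]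
      rfl
    rw [h1]
    exact ih _

lemma wordOpDag_compress (l : List (Fin d × Matrix ν ν ℂ)) :
    ∀ x ∈ obsSpace A b,
      Q₀ (wordOpDag A l x) =
        wordOpDag (fun j G => Q₀.comp ((A j G).comp Q₀)) l (Q₀ x) := by
  induction l with
  | nil => intro x _; rw [wordOpDag_nil, wordOpDag_nil]; rfl
  | cons g t ih =>
    intro x hx
    rw [wordOpDag_cons, wordOpDag_cons]
    have hy : ContinuousLinearMap.adjoint (A g.1 g.2.conjTranspose) x ∈ obsSpace A b :=
      obs_invariant g.1 g.2.conjTranspose x hx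
    rw [ContinuousLinearMap.comp_apply, ih _ hy,
      key_obs hQidem hQsa hQran g.1 g.2.conjTranspose x hx,
      ContinuousLinearMap.comp_apply, adjoint_comp_Q hQsa]
    show _ = wordOpDag _ t (Q₀ ((ContinuousLinearMap.adjoint (A g.1 g.2.conjTranspose)) (Q₀ (Q₀ x))))
    rw [Qidem_apply hQidem]

omit hQidem hQsa hQran in
lemma adjB_orth {z : H} (hz : z ∈ (obsSpace A b)ᗮ) :
    ContinuousLinearMap.adjoint b z = 0 := by
  refine ext_inner_left ℂ fun v => ?_
  rw [ContinuousLinearMap.adjoint_inner_right, inner_zero_right]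
  exact (Submodule.mem_orthogonal _ _).1 hz _ (bu_mem_obs v)

end Proj

section Main
local notation "⟪" x ", " y "⟫" => @inner ℂ _ _ x y

variable {d : ℕ} {ν : Type*} [Fintype ν] [DecidableEq ν]
variable {A : Fin d → Matrix ν ν ℂ → (H →L[ℂ] H)}
variable {b c : EuclideanSpace ℂ ν →L[ℂ] H}
variable {Q₀ : H →L[ℂ] H}
variable (hQidem : Q₀.comp Q₀ = Q₀) (hQsa : IsSelfAdjoint Q₀)
  (hQran : LinearMap.range (Q₀ : H →ₗ[ℂ] H) =
    ctrlSpace A c ⊓ (ctrlSpace A c ⊓ (obsSpace A b)ᗮ)ᗮ)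
include hQidem hQsa hQran

lemma M_isClosed : IsClosed
    ((ctrlSpace A c ⊓ (ctrlSpace A c ⊓ (obsSpace A b)ᗮ)ᗮ : Submodule ℂ H) : Set H) := by
  rw [Submodule.coe_inf]
  exact IsClosed.inter ctrl_isClosed (Submodule.isClosed_orthogonal _)

lemma ctrl_comp_eq :
    ctrlSpace (fun j G => Q₀.comp ((A j G).comp Q₀)) (Q₀.comp c) =
      ctrlSpace A c ⊓ (ctrlSpace A c ⊓ (obsSpace A b)ᗮ)ᗮ := by
  apply le_antisymm
  · refine Submodule.topologicalClosure_minimal _ (Submodule.span_le.2 ?_)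
      (M_isClosed hQidem hQsa hQran)
    rintro x ⟨l, v, rfl⟩
    rw [← hQran]
    exact wordOp_comp_mem_range hQidem l (c v)
  · intro x hx
    have hxr : x ∈ LinearMap.range (Q₀ : H →ₗ[ℂ] H) := by rw [hQran]; exact hx
    have hQx : Q₀ x = x := Q_range_eq_self hQidem hxr
    have key : ∀ w ∈ ctrlSpace A c,
        Q₀ w ∈ ctrlSpace (fun j G => Q₀.comp ((A j G).comp Q₀)) (Q₀.comp c) := by
      refine map_closure_span_le ctrl_isClosed ?_
      rintro w ⟨l, v, rfl⟩
      rw [wordOp_compress hQidem hQsa hQran l v]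
      exact mem_ctrl l v
    rw [← hQx]
    exact key x hx.1

lemma obs_comp_eq :
    obsSpace (fun j G => Q₀.comp ((A j G).comp Q₀)) (Q₀.comp b) =
      ctrlSpace A c ⊓ (ctrlSpace A c ⊓ (obsSpace A b)ᗮ)ᗮ := by
  have hle : obsSpace (fun j G => Q₀.comp ((A j G).comp Q₀)) (Q₀.comp b) ≤
      ctrlSpace A c ⊓ (ctrlSpace A c ⊓ (obsSpace A b)ᗮ)ᗮ := by
    refine Submodule.topologicalClosure_minimal _ (Submodule.span_le.2 ?_)
      (M_isClosed hQidem hQsa hQran)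
    rintro x ⟨l, u, rfl⟩
    rw [← hQran]
    exact wordOpDag_comp_mem_range hQidem hQsa l (b u)
  apply le_antisymm hle
  intro x hx
  have hxr : x ∈ LinearMap.range (Q₀ : H →ₗ[ℂ] H) := by rw [hQran]; exact hx
  have hQx : Q₀ x = x := Q_range_eq_self hQidem hxr
  set K : Submodule ℂ H := obsSpace (fun j G => Q₀.comp ((A j G).comp Q₀)) (Q₀.comp b)
    with hK
  have hKclosed : IsClosed (K : Set H) := obs_isClosed
  haveI : CompleteSpace K := hKclosed.completeSpace_coe
  set px : H := K.starProjection x with hpx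
  have hpxK : px ∈ K := K.starProjection_apply_mem x
  have hrK : x - px ∈ Kᗮ := Submodule.sub_starProjection_mem_orthogonal x
  have hrM : x - px ∈ ctrlSpace A c ⊓ (ctrlSpace A c ⊓ (obsSpace A b)ᗮ)ᗮ :=
    sub_mem hx (hle hpxK)
  have hrr : x - px ∈ LinearMap.range (Q₀ : H →ₗ[ℂ] H) := by rw [hQran]; exact hrM
  have hQr : Q₀ (x - px) = x - px := Q_range_eq_self hQidem hrr
  -- Q₀ maps obsSpace into K
  have keyQ : ∀ w ∈ obsSpace A b, Q₀ w ∈ K := by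
    refine map_closure_span_le hKclosed ?_
    rintro w ⟨l, u, rfl⟩
    rw [wordOpDag_compress hQidem hQsa hQran l _ (bu_mem_obs u)]
    exact mem_obs l u
  -- x - px is orthogonal to obsSpace
  have hrO : x - px ∈ (obsSpace A b)ᗮ := by
    rw [Submodule.mem_orthogonal]
    intro y hy
    have h1 : ⟪y, x - px⟫ = ⟪y, Q₀ (x - px)⟫ := by rw [hQr]
    rw [h1, ← Qsa_inner hQsa]
    exact (Submodule.mem_orthogonal _ _).1 hrK _ (keyQ y hy)
  -- hence x - px ∈ N, but also x - px ∈ Nᗮ, so it is zero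
  have hrN : x - px ∈ ctrlSpace A c ⊓ (obsSpace A b)ᗮ := Submodule.mem_inf.2 ⟨hrM.1, hrO⟩
  have hz : ⟪x - px, x - px⟫ = 0 := by
    have := (Submodule.mem_orthogonal _ _).1 hrM.2 _ hrN
    exact this
  have : x - px = 0 := inner_self_eq_zero.1 hz
  have hxeq : x = px := by rwa [sub_eq_zero] at this
  rw [hxeq]; exact hpxK

lemma moments_eq (l : List (Fin d × Matrix ν ν ℂ)) :
    (ContinuousLinearMap.adjoint (Q₀.comp b)).comp
        ((wordOp (fun j G => Q₀.comp ((A j G).comp Q₀)) l).comp (Q₀.comp c)) =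
      (ContinuousLinearMap.adjoint b).comp ((wordOp A l).comp c) := by
  refine ContinuousLinearMap.ext fun v => ?_
  have hadj : ContinuousLinearMap.adjoint (Q₀.comp b) =
      (ContinuousLinearMap.adjoint b).comp Q₀ := by
    rw [ContinuousLinearMap.adjoint_comp, hQsa.adjoint_eq]
  show (ContinuousLinearMap.adjoint (Q₀.comp b))
      (wordOp (fun j G => Q₀.comp ((A j G).comp Q₀)) l (Q₀ (c v))) = _
  rw [hadj]
  show (ContinuousLinearMap.adjoint b)
      (Q₀ (wordOp (fun j G => Q₀.comp ((A j G).comp Q₀)) l (Q₀ (c v)))) = _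
  rw [Q_range_eq_self hQidem (wordOp_comp_mem_range hQidem l (c v)),
    ← wordOp_compress hQidem hQsa hQran l v]
  have horth : ContinuousLinearMap.adjoint b (wordOp A l (c v) - Q₀ (wordOp A l (c v))) = 0 :=
    adjB_orth (sub_mem_N hQidem hQsa hQran _ (mem_ctrl l v)).2
  rw [map_sub, sub_eq_zero] at horth
  exact horth.symm

end Main

section ApplyLemmas
variable {ι : Type*} [Fintype ι] [DecidableEq ι]

lemma projL_apply (p : ι) (x : PiLp 2 (fun _ : ι => E)) : projL ι E p x = x p := rfl

lemma inclL_apply (p q : ι) (y : E) : inclL ι E p y q = if q = p then y else 0 := by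
  show (ContinuousLinearMap.pi
    (fun q => if q = p then ContinuousLinearMap.id ℂ E else 0)) y q = _
  rw [ContinuousLinearMap.pi_apply]
  split <;> rfl

lemma proj_incl (p q : ι) (y : E) : projL ι E p (inclL ι E q y) = if p = q then y else 0 := by
  rw [projL_apply, inclL_apply]

lemma pilp_sum_apply {κ : Type*} (s : Finset κ) (f : κ → PiLp 2 (fun _ : ι => E)) (p : ι) :
    (∑ q ∈ s, f q) p = ∑ q ∈ s, f q p := by
  exact map_sum (projL ι E p) f s

lemma euc_sum_apply {κ : Type*} (s : Finset κ) (f : κ → EuclideanSpace ℂ ι) (i : ι) :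
    (∑ q ∈ s, f q) i = ∑ q ∈ s, f q i := by
  exact map_sum (EuclideanSpace.proj (𝕜 := ℂ) i) f s

lemma adjoint_inclL [CompleteSpace E] (p : ι) :
    ContinuousLinearMap.adjoint (inclL ι E p) = projL ι E p := by
  symm
  rw [ContinuousLinearMap.eq_adjoint_iff]
  intro x y
  rw [projL_apply, PiLp.inner_apply]
  have h : ∀ q, @inner ℂ _ _ (x q) (inclL ι E p y q) =
      if q = p then @inner ℂ _ _ (x p) y else (0 : ℂ) := by
    intro q
    rw [inclL_apply]
    by_cases h : q = p
    · subst h; simp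
    · simp [h]
  rw [Finset.sum_congr rfl fun q _ => h q, Finset.sum_ite_eq' Finset.univ p]
  simp

lemma adjoint_projL [CompleteSpace E] (p : ι) :
    ContinuousLinearMap.adjoint (projL ι E p) = inclL ι E p := by
  rw [← adjoint_inclL (E := E) p, ContinuousLinearMap.adjoint_adjoint]

lemma amp_apply {μ ν : Type*} [Fintype μ] [DecidableEq μ]
    (A : Matrix ν ν ℂ → (E →L[ℂ] E)) (Z : Matrix (μ × ν) (μ × ν) ℂ)
    (x : PiLp 2 (fun _ : μ => E)) (p : μ) :
    amp A Z x p = ∑ q, A (blk Z p q) (x q) := by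
  show projL μ E p (amp A Z x) = _
  rw [amp, ContinuousLinearMap.sum_apply]
  rw [map_sum (projL μ E p) _ Finset.univ]
  have h : ∀ p', projL μ E p ((∑ q, (inclL μ E p').comp ((A (blk Z p' q)).comp (projL μ E q))) x)
      = if p = p' then ∑ q, A (blk Z p q) (x q) else 0 := by
    intro p'
    rw [ContinuousLinearMap.sum_apply, map_sum (projL μ E p) _ Finset.univ]
    by_cases h : p = p'
    · subst h
      simp only [if_true]
      refine Finset.sum_congr rfl fun q _ => ?_
      rw [ContinuousLinearMap.comp_apply, ContinuousLinearMap.comp_apply, proj_incl]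
      simp [projL_apply]
    · rw [if_neg h, Finset.sum_eq_zero]
      intro q _
      rw [ContinuousLinearMap.comp_apply, ContinuousLinearMap.comp_apply, proj_incl]
      simp [h]
  rw [Finset.sum_congr rfl fun p' _ => h p', Finset.sum_ite_eq Finset.univ p]
  simp

lemma restrL_apply {μ ν : Type*} [Fintype μ] [Fintype ν] [DecidableEq ν] (p : μ)
    (u : EuclideanSpace ℂ (μ × ν)) (i : ν) :
    restrL μ ν p u i = u (p, i) := by
  rw [restrL, ContinuousLinearMap.sum_apply, euc_sum_apply]
  have h : ∀ i', (((EuclideanSpace.proj ((p, i') : μ × ν)).smulRight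
      (EuclideanSpace.single i' (1 : ℂ))) u) i = if i = i' then u (p, i') else 0 := by
    intro i'
    rw [ContinuousLinearMap.smulRight_apply]
    show u (p, i') • (EuclideanSpace.single i' (1 : ℂ)) i = _
    rw [EuclideanSpace.single_apply]
    by_cases h : i = i' <;> simp [h]
  rw [Finset.sum_congr rfl fun i' _ => h i', Finset.sum_ite_eq Finset.univ i]
  simp

lemma ampVec_apply {μ ν : Type*} [Fintype μ] [DecidableEq μ] [Fintype ν] [DecidableEq ν]
    (b : EuclideanSpace ℂ ν →L[ℂ] E) (u : EuclideanSpace ℂ (μ × ν)) (p : μ) :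
    ampVec b u p = b (restrL μ ν p u) := by
  show projL μ E p (ampVec b u) = _
  rw [ampVec, ContinuousLinearMap.sum_apply, map_sum (projL μ E p) _ Finset.univ]
  have h : ∀ p', projL μ E p (((inclL μ E p').comp (b.comp (restrL μ ν p'))) u) =
      if p = p' then b (restrL μ ν p u) else 0 := by
    intro p'
    rw [ContinuousLinearMap.comp_apply, ContinuousLinearMap.comp_apply, proj_incl]
    by_cases h : p = p' <;> simp [h]
  rw [Finset.sum_congr rfl fun p' _ => h p', Finset.sum_ite_eq Finset.univ p]
  simp

end ApplyLemmas

section NormBounds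
open Matrix

/-- Operator (Euclidean) norm of a rectangular complex matrix. -/
def opn {α β : Type*} [Fintype α] [Fintype β] [DecidableEq β] (M : Matrix α β ℂ) : ℝ :=
  ‖LinearMap.toContinuousLinearMap (Matrix.toEuclideanLin M)‖

variable {α β : Type*} [Fintype α] [Fintype β] [DecidableEq β]

lemma opn_nonneg (M : Matrix α β ℂ) : 0 ≤ opn M := norm_nonneg _

lemma eucLin_norm_le (M : Matrix α β ℂ) (v : EuclideanSpace ℂ β) :
    ‖Matrix.toEuclideanLin M v‖ ≤ opn M * ‖v‖ := by
  have h := (LinearMap.toContinuousLinearMap (Matrix.toEuclideanLin M)).le_opNorm v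
  rwa [LinearMap.coe_toContinuousLinearMap'] at h

lemma eucLin_apply (M : Matrix α β ℂ) (v : EuclideanSpace ℂ β) (a : α) :
    Matrix.toEuclideanLin M v a = ∑ b', M a b' * v b' := by
  rw [Matrix.toEuclideanLin_apply]
  show Matrix.mulVec M _ a = _
  simp only [Matrix.mulVec, dotProduct]

lemma euc_norm_sq {ι : Type*} [Fintype ι] (x : EuclideanSpace ℂ ι) :
    ‖x‖ ^ 2 = ∑ i, ‖x i‖ ^ 2 :=
  PiLp.norm_sq_eq_of_L2 _ x

lemma pilp_norm_sq {ι : Type*} [Fintype ι] (x : PiLp 2 (fun _ : ι => E)) :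
    ‖x‖ ^ 2 = ∑ i, ‖x i‖ ^ 2 :=
  PiLp.norm_sq_eq_of_L2 _ x

lemma norm_le_of_sq_le_sq {u : ℝ} {a : ℝ} (hu : 0 ≤ u) (ha : 0 ≤ a) (h : u ^ 2 ≤ a ^ 2) :
    u ≤ a := by
  nlinarith

/-- Key bound: a scalar matrix acting blockwise on a Hilbert direct sum of copies of `E`
has norm at most the Euclidean operator norm of the matrix. -/
lemma matrix_smul_norm_le {μ : Type*} [Fintype μ] [DecidableEq μ] (M : Matrix μ μ ℂ)
    (y z : PiLp 2 (fun _ : μ => E)) (hz : ∀ p, z p = ∑ q, M p q • y q) :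
    ‖z‖ ≤ opn M * ‖y‖ := by
  classical
  set S : Set E := Set.range (fun q : μ => y q) with hS
  haveI : FiniteDimensional ℂ (Submodule.span ℂ S) :=
    FiniteDimensional.span_of_finite ℂ (Set.finite_range _)
  set F : Submodule ℂ E := Submodule.span ℂ S with hF
  let e := stdOrthonormalBasis ℂ F
  let w : μ → F := fun q => ⟨y q, Submodule.subset_span ⟨q, rfl⟩⟩
  let cv : μ → EuclideanSpace ℂ (Fin (Module.finrank ℂ F)) := fun q => e.repr (w q)
  let vi : Fin (Module.finrank ℂ F) → EuclideanSpace ℂ μ :=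
    fun i => (WithLp.equiv 2 (μ → ℂ)).symm (fun q => cv q i)
  have hvi : ∀ i q, vi i q = cv q i := fun i q => rfl
  have hcv : ∀ q, ‖cv q‖ = ‖y q‖ := by
    intro q
    show ‖e.repr (w q)‖ = _
    rw [LinearIsometryEquiv.norm_map]
    rfl
  have hz2 : ∀ p, ‖z p‖ = ‖∑ q, M p q • cv q‖ := by
    intro p
    have h1 : z p = ((∑ q, M p q • w q : F) : E) := by
      rw [hz p]
      push_cast
      rfl
    have h2 : ‖z p‖ = ‖(∑ q, M p q • w q : F)‖ := by rw [h1]; rfl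
    rw [h2, ← LinearIsometryEquiv.norm_map e.repr, map_sum]
    congr 1
    refine Finset.sum_congr rfl fun q _ => ?_
    rw [LinearIsometryEquiv.map_smul]
  have hcomp : ∀ p i, (∑ q, M p q • cv q) i = ∑ q, M p q * cv q i := by
    intro p i
    rw [euc_sum_apply]
    rfl
  have hkey : ‖z‖ ^ 2 ≤ (opn M) ^ 2 * ‖y‖ ^ 2 := by
    rw [pilp_norm_sq]
    have step1 : ∑ p, ‖z p‖ ^ 2 = ∑ p, ∑ i, ‖∑ q, M p q * cv q i‖ ^ 2 := by
      refine Finset.sum_congr rfl fun p _ => ?_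
      rw [hz2 p, euc_norm_sq]
      exact Finset.sum_congr rfl fun i _ => by rw [hcomp p i]
    rw [step1, Finset.sum_comm]
    have step2 : ∀ i, ∑ p, ‖∑ q, M p q * cv q i‖ ^ 2 =
        ‖Matrix.toEuclideanLin M (vi i)‖ ^ 2 := by
      intro i
      rw [euc_norm_sq]
      refine (Finset.sum_congr rfl fun p _ => ?_).symm
      rw [eucLin_apply]
      exact congrArg (fun t => ‖t‖ ^ 2) (Finset.sum_congr rfl fun q _ => by rw [hvi i q])
    rw [Finset.sum_congr rfl fun i _ => step2 i]
    have step3 : ∀ i : Fin (Module.finrank ℂ F),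
        ‖Matrix.toEuclideanLin M (vi i)‖ ^ 2 ≤ (opn M) ^ 2 * ‖vi i‖ ^ 2 := by
      intro i
      rw [← mul_pow]
      exact pow_le_pow_left₀ (norm_nonneg _) (eucLin_norm_le M _) 2
    refine le_trans (Finset.sum_le_sum fun i _ => step3 i) ?_
    rw [← Finset.mul_sum]
    have step4 : ∑ i : Fin (Module.finrank ℂ F), ‖vi i‖ ^ 2 = ‖y‖ ^ 2 := by
      have h5 : ∀ i : Fin (Module.finrank ℂ F), ‖vi i‖ ^ 2 = ∑ q, ‖cv q i‖ ^ 2 := by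
        intro i
        rw [euc_norm_sq]
        exact Finset.sum_congr rfl fun q _ => by rw [hvi i q]
      rw [Finset.sum_congr rfl fun i _ => h5 i, Finset.sum_comm, pilp_norm_sq]
      refine Finset.sum_congr rfl fun q _ => ?_
      rw [← hcv q, euc_norm_sq]
    rw [step4]
  have hfin : (opn M) ^ 2 * ‖y‖ ^ 2 = (opn M * ‖y‖) ^ 2 := (mul_pow _ _ 2).symm
  exact norm_le_of_sq_le_sq (norm_nonneg _)
    (mul_nonneg (opn_nonneg M) (norm_nonneg _)) (hfin ▸ hkey)

/-- Norm of a submatrix (along injective index maps) is at most the norm of the matrix. -/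
lemma opn_submatrix_le {γ δ : Type*} [Fintype γ] [Fintype δ] [DecidableEq δ] [DecidableEq α]
    (M : Matrix α β ℂ) (f : γ → α) (g : δ → β)
    (hf : Function.Injective f) (hg : Function.Injective g) :
    opn (M.submatrix f g) ≤ opn M := by
  classical
  refine ContinuousLinearMap.opNorm_le_bound _ (opn_nonneg M) fun v => ?_
  rw [LinearMap.coe_toContinuousLinearMap']
  set vt : EuclideanSpace ℂ β :=
    (WithLp.equiv 2 (β → ℂ)).symm (fun b' => ∑ d', if b' = g d' then v d' else 0) with hvt
  have hvtapp : ∀ b', vt b' = ∑ d', if b' = g d' then v d' else 0 := fun b' => rfl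
  have hvtg : ∀ d', vt (g d') = v d' := by
    intro d'
    rw [hvtapp]
    have h : ∀ d'', (if g d' = g d'' then v d'' else 0) = if d'' = d' then v d'' else 0 := by
      intro d''
      by_cases h : d'' = d'
      · subst h; simp
      · have hne : g d' ≠ g d'' := fun hc => h (hg hc.symm)
        simp [h, hne]
    rw [Finset.sum_congr rfl fun d'' _ => h d'', Finset.sum_ite_eq' Finset.univ d']
    simp
  have hvtnorm : ‖vt‖ = ‖v‖ := by
    have h1 : ‖vt‖ ^ 2 = ‖v‖ ^ 2 := by
      rw [euc_norm_sq, euc_norm_sq]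
      have h2 : ∑ b', ‖vt b'‖ ^ 2 = ∑ b' ∈ Finset.univ.image g, ‖vt b'‖ ^ 2 := by
        refine (Finset.sum_subset (Finset.subset_univ _) fun b' _ hb' => ?_).symm
        have hz : vt b' = 0 := by
          rw [hvtapp]
          refine Finset.sum_eq_zero fun d' _ => ?_
          have : b' ≠ g d' := fun hc => hb' (Finset.mem_image.2 ⟨d', Finset.mem_univ _, hc.symm⟩)
          simp [this]
        rw [hz]
        simp
      rw [h2, Finset.sum_image (fun a _ a' _ h => hg h)]
      exact Finset.sum_congr rfl fun d' _ => by rw [hvtg d']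
    nlinarith [norm_nonneg vt, norm_nonneg v]
  have happ : ∀ c', Matrix.toEuclideanLin (M.submatrix f g) v c' =
      Matrix.toEuclideanLin M vt (f c') := by
    intro c'
    rw [eucLin_apply, eucLin_apply]
    have h : ∀ b', M (f c') b' * vt b' =
        ∑ d', if b' = g d' then M (f c') b' * v d' else 0 := by
      intro b'
      rw [hvtapp, Finset.mul_sum]
      exact Finset.sum_congr rfl fun d' _ => by rw [mul_ite, mul_zero]
    rw [Finset.sum_congr rfl fun b' _ => h b', Finset.sum_comm]
    refine Finset.sum_congr rfl fun d' _ => ?_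
    rw [Finset.sum_ite_eq' Finset.univ (g d')]
    simp [Matrix.submatrix_apply]
  have hbound : ‖Matrix.toEuclideanLin (M.submatrix f g) v‖ ^ 2 ≤
      ‖Matrix.toEuclideanLin M vt‖ ^ 2 := by
    rw [euc_norm_sq, euc_norm_sq]
    have h3 : ∑ c', ‖Matrix.toEuclideanLin (M.submatrix f g) v c'‖ ^ 2 =
        ∑ a ∈ Finset.univ.image f, ‖Matrix.toEuclideanLin M vt a‖ ^ 2 := by
      rw [Finset.sum_image (fun a _ a' _ h => hf h)]
      exact Finset.sum_congr rfl fun c' _ => by rw [happ c']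
    rw [h3]
    exact Finset.sum_le_sum_of_subset_of_nonneg (Finset.subset_univ _)
      (fun a _ _ => by positivity)
  have h4 : ‖Matrix.toEuclideanLin (M.submatrix f g) v‖ ≤ ‖Matrix.toEuclideanLin M vt‖ :=
    norm_le_of_sq_le_sq (norm_nonneg _) (norm_nonneg _) hbound
  calc ‖Matrix.toEuclideanLin (M.submatrix f g) v‖ ≤ ‖Matrix.toEuclideanLin M vt‖ := h4
    _ ≤ opn M * ‖vt‖ := eucLin_norm_le M vt
    _ = opn M * ‖v‖ := by rw [hvtnorm]

end NormBounds

section AmpBound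
variable {μ ν : Type*} [Fintype μ] [DecidableEq μ] [Fintype ν] [DecidableEq ν]

lemma sum_swap4 {M : Type*} [AddCommMonoid M] {κ₁ κ₂ κ₃ κ₄ : Type*}
    [Fintype κ₁] [Fintype κ₂] [Fintype κ₃] [Fintype κ₄] (f : κ₁ → κ₂ → κ₃ → κ₄ → M) :
    ∑ a, ∑ b, ∑ c, ∑ d, f a b c d = ∑ c, ∑ d, ∑ a, ∑ b, f a b c d := by
  have h1 : ∀ a, ∑ b, ∑ c, ∑ d, f a b c d = ∑ c, ∑ d, ∑ b, f a b c d := by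
    intro a
    rw [Finset.sum_comm]
    exact Finset.sum_congr rfl fun c _ => Finset.sum_comm
  rw [Finset.sum_congr rfl fun a _ => h1 a, Finset.sum_comm]
  exact Finset.sum_congr rfl fun c _ => Finset.sum_comm

lemma A_blk_decomp {A : Matrix ν ν ℂ → (E →L[ℂ] E)} (hA : IsLinearMap ℂ A)
    (W : Matrix ν ν ℂ) :
    A W = ∑ k, ∑ l, W k l • A (Matrix.single k l 1) := by
  have hL : A W = ∑ k, ∑ l, A (Matrix.single k l (W k l)) := by
    conv_lhs => rw [Matrix.matrix_eq_sum_single W]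
    rw [show A = ⇑(IsLinearMap.mk' A hA) from rfl, map_sum]
    exact Finset.sum_congr rfl fun k _ => map_sum _ _ _
  rw [hL]
  refine Finset.sum_congr rfl fun k _ => Finset.sum_congr rfl fun l _ => ?_
  rw [show Matrix.single k l (W k l) = W k l • Matrix.single k l (1 : ℂ) by
    rw [Matrix.smul_single, smul_eq_mul, mul_one]]
  exact (IsLinearMap.mk' A hA).map_smul _ _

lemma amp_decomp {A : Matrix ν ν ℂ → (E →L[ℂ] E)} (hA : IsLinearMap ℂ A)
    (Z : Matrix (μ × ν) (μ × ν) ℂ) :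
    amp A Z = ∑ k, ∑ l, ∑ p, ∑ q, blk Z p q k l •
      ((inclL μ E p).comp ((A (Matrix.single k l 1)).comp (projL μ E q))) := by
  rw [amp]
  have h1 : ∀ p q : μ, (inclL μ E p).comp ((A (blk Z p q)).comp (projL μ E q)) =
      ∑ k, ∑ l, blk Z p q k l •
        ((inclL μ E p).comp ((A (Matrix.single k l 1)).comp (projL μ E q))) := by
    intro p q
    rw [A_blk_decomp hA (blk Z p q)]
    rw [ContinuousLinearMap.finset_sum_comp, ContinuousLinearMap.comp_finset_sum]
    refine Finset.sum_congr rfl fun k _ => ?_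
    rw [ContinuousLinearMap.finset_sum_comp, ContinuousLinearMap.comp_finset_sum]
    refine Finset.sum_congr rfl fun l _ => ?_
    rw [ContinuousLinearMap.smul_comp, ContinuousLinearMap.comp_smul]
  rw [Finset.sum_congr rfl fun p _ => Finset.sum_congr rfl fun q _ => h1 p q]
  exact sum_swap4 _

lemma kron_apply (M : Matrix μ μ ℂ) (T : E →L[ℂ] E) (x : PiLp 2 (fun _ : μ => E)) (p : μ) :
    (∑ p', ∑ q, M p' q • ((inclL μ E p').comp (T.comp (projL μ E q)))) x p =
      ∑ q, M p q • T (x q) := by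
  rw [ContinuousLinearMap.sum_apply, pilp_sum_apply]
  have h : ∀ p', ((∑ q, M p' q • ((inclL μ E p').comp (T.comp (projL μ E q)))) x) p =
      if p = p' then ∑ q, M p q • T (x q) else 0 := by
    intro p'
    rw [ContinuousLinearMap.sum_apply, pilp_sum_apply]
    have hterm : ∀ q, ((M p' q • ((inclL μ E p').comp (T.comp (projL μ E q)))) x) p =
        if p = p' then M p' q • T (x q) else 0 := by
      intro q
      have h0 : ((M p' q • ((inclL μ E p').comp (T.comp (projL μ E q)))) x) p =
          M p' q • (inclL μ E p' (T (x q)) p) := rfl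
      rw [h0, inclL_apply]
      by_cases h : p = p' <;> simp [h]
    rw [Finset.sum_congr rfl fun q _ => hterm q]
    by_cases h : p = p'
    · subst h; simp
    · simp [h]
  rw [Finset.sum_congr rfl fun p' _ => h p', Finset.sum_ite_eq Finset.univ p]
  simp

lemma kron_norm_le (M : Matrix μ μ ℂ) (T : E →L[ℂ] E) :
    ‖∑ p', ∑ q, M p' q • ((inclL μ E p').comp (T.comp (projL μ E q)))‖ ≤
      opn M * ‖T‖ := by
  refine ContinuousLinearMap.opNorm_le_bound _
    (mul_nonneg (opn_nonneg M) (norm_nonneg T)) fun x => ?_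
  set yv : PiLp 2 (fun _ : μ => E) :=
    (WithLp.equiv 2 (∀ _ : μ, E)).symm (fun q => T (x q)) with hyv
  have hyvapp : ∀ q, yv q = T (x q) := fun q => rfl
  have h1 : ‖(∑ p', ∑ q, M p' q • ((inclL μ E p').comp (T.comp (projL μ E q)))) x‖ ≤
      opn M * ‖yv‖ := by
    refine matrix_smul_norm_le M yv _ fun p => ?_
    rw [kron_apply]
    exact Finset.sum_congr rfl fun q _ => by rw [hyvapp]
  have h2 : ‖yv‖ ≤ ‖T‖ * ‖x‖ := by
    refine norm_le_of_sq_le_sq (norm_nonneg _)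
      (mul_nonneg (norm_nonneg T) (norm_nonneg x)) ?_
    rw [pilp_norm_sq, mul_pow, pilp_norm_sq, Finset.mul_sum]
    refine Finset.sum_le_sum fun q _ => ?_
    rw [hyvapp, ← mul_pow]
    exact pow_le_pow_left₀ (norm_nonneg _) (T.le_opNorm (x q)) 2
  calc ‖(∑ p', ∑ q, M p' q • ((inclL μ E p').comp (T.comp (projL μ E q)))) x‖
      ≤ opn M * ‖yv‖ := h1
    _ ≤ opn M * (‖T‖ * ‖x‖) := mul_le_mul_of_nonneg_left h2 (opn_nonneg M)
    _ = opn M * ‖T‖ * ‖x‖ := (mul_assoc _ _ _).symm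

lemma amp_norm_le {A : Matrix ν ν ℂ → (E →L[ℂ] E)} (hA : IsLinearMap ℂ A)
    (Z : Matrix (μ × ν) (μ × ν) ℂ) :
    ‖amp (E := E) A Z‖ ≤ (∑ k, ∑ l, ‖A (Matrix.single k l 1)‖) * opn Z := by
  rw [amp_decomp hA Z]
  refine le_trans (norm_sum_le (E := PiLp 2 (fun _ : μ => E) →L[ℂ] PiLp 2 (fun _ : μ => E))
    Finset.univ _) ?_
  rw [Finset.sum_mul]
  refine Finset.sum_le_sum fun k _ => ?_
  refine le_trans (norm_sum_le (E := PiLp 2 (fun _ : μ => E) →L[ℂ] PiLp 2 (fun _ : μ => E))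
    Finset.univ _) ?_
  rw [Finset.sum_mul]
  refine Finset.sum_le_sum fun l _ => ?_
  have hsub : (Matrix.of fun p q => blk Z p q k l) =
      Z.submatrix (fun p : μ => (p, k)) (fun q : μ => (q, l)) := rfl
  have h1 : ‖∑ p, ∑ q, blk Z p q k l •
      ((inclL μ E p).comp ((A (Matrix.single k l 1)).comp (projL μ E q)))‖ ≤
      opn (Matrix.of fun p q => blk Z p q k l) * ‖A (Matrix.single k l 1)‖ :=
    kron_norm_le _ _
  refine le_trans h1 ?_
  rw [mul_comm (‖A (Matrix.single k l 1)‖)]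
  refine mul_le_mul_of_nonneg_right ?_ (norm_nonneg _)
  rw [hsub]
  refine opn_submatrix_le Z _ _ ?_ ?_
  · intro a b h; exact congrArg Prod.fst h
  · intro a b h; exact congrArg Prod.fst h

lemma opn_le_colNorm {d : ℕ} {ι : Type*} [Fintype ι] [DecidableEq ι]
    (X : Fin d → Matrix ι ι ℂ) (j : Fin d) : opn (X j) ≤ colNorm X := by
  have hcol : colNorm X = opn (Matrix.of fun (pq : Fin d × ι) (r : ι) => X pq.1 pq.2 r) := rfl
  have hsub : X j = (Matrix.of fun (pq : Fin d × ι) (r : ι) => X pq.1 pq.2 r).submatrix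
      (fun i : ι => ((j, i) : Fin d × ι)) id := rfl
  rw [hcol, hsub]
  refine opn_submatrix_le _ _ _ ?_ Function.injective_id
  intro a b h
  exact congrArg Prod.snd h

lemma pencilSum_norm_le {d : ℕ} (A : Fin d → Matrix ν ν ℂ → (E →L[ℂ] E))
    (hA : ∀ j, IsLinearMap ℂ (A j)) (Z : Fin d → Matrix (μ × ν) (μ × ν) ℂ) :
    ‖∑ j, amp (E := E) (A j) (Z j)‖ ≤
      (∑ j, ∑ k, ∑ l, ‖A j (Matrix.single k l 1)‖) * colNorm Z := by
  refine le_trans (norm_sum_le (E := PiLp 2 (fun _ : μ => E) →L[ℂ] PiLp 2 (fun _ : μ => E))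
    Finset.univ _) ?_
  rw [Finset.sum_mul]
  refine Finset.sum_le_sum fun j _ => ?_
  refine le_trans (amp_norm_le (hA j) (Z j)) ?_
  refine le_trans (mul_le_mul_of_nonneg_left (opn_le_colNorm Z j) ?_) (le_refl _)
  positivity

end AmpBound

section Compress
local notation "⟪" x ", " y "⟫" => @inner ℂ _ _ x y

variable {μ : Type*} [Fintype μ] [DecidableEq μ]

lemma pilp_ext {ι : Type*} {x y : PiLp 2 (fun _ : ι => E)} (h : ∀ p, x p = y p) : x = y :=
  PiLp.ext h

/-- The block-diagonal ampliation of an operator. -/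
def Qhat (μ : Type*) [Fintype μ] [DecidableEq μ] (Q₀ : E →L[ℂ] E) :
    PiLp 2 (fun _ : μ => E) →L[ℂ] PiLp 2 (fun _ : μ => E) :=
  ∑ p, (inclL μ E p).comp (Q₀.comp (projL μ E p))

lemma Qhat_apply (Q₀ : E →L[ℂ] E) (x : PiLp 2 (fun _ : μ => E)) (p : μ) :
    Qhat μ Q₀ x p = Q₀ (x p) := by
  rw [Qhat, ContinuousLinearMap.sum_apply, pilp_sum_apply]
  have h : ∀ p', (((inclL μ E p').comp (Q₀.comp (projL μ E p'))) x) p =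
      if p = p' then Q₀ (x p) else 0 := by
    intro p'
    have h0 : (((inclL μ E p').comp (Q₀.comp (projL μ E p'))) x) p =
        inclL μ E p' (Q₀ (x p')) p := rfl
    rw [h0, inclL_apply]
    by_cases h : p = p'
    · subst h; simp
    · simp [h]
  rw [Finset.sum_congr rfl fun p' _ => h p', Finset.sum_ite_eq Finset.univ p]
  simp

lemma Qhat_adjoint [CompleteSpace E] {Q₀ : E →L[ℂ] E} (hQsa : IsSelfAdjoint Q₀) :
    ContinuousLinearMap.adjoint (Qhat μ Q₀) = Qhat μ Q₀ := by
  have h := (ContinuousLinearMap.eq_adjoint_iff (Qhat μ Q₀) (Qhat μ Q₀)).2 ?_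
  · exact h.symm
  · intro x y
    rw [PiLp.inner_apply, PiLp.inner_apply]
    refine Finset.sum_congr rfl fun p _ => ?_
    rw [Qhat_apply, Qhat_apply]
    exact hQsa.isSymmetric (x p) (y p)

lemma Qhat_idem {Q₀ : E →L[ℂ] E} (hQidem : Q₀.comp Q₀ = Q₀)
    (x : PiLp 2 (fun _ : μ => E)) : Qhat μ Q₀ (Qhat μ Q₀ x) = Qhat μ Q₀ x := by
  refine pilp_ext fun p => ?_
  rw [Qhat_apply, Qhat_apply]
  exact ContinuousLinearMap.ext_iff.1 hQidem (x p)

end Compress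

section AnalyticPart
local notation "⟪" x ", " y "⟫" => @inner ℂ _ _ x y

variable {d : ℕ} {μ ν : Type*} [Fintype μ] [DecidableEq μ] [Fintype ν] [DecidableEq ν]
variable {A : Fin d → Matrix ν ν ℂ → (H →L[ℂ] H)}
variable {b c : EuclideanSpace ℂ ν →L[ℂ] H}
variable {Q₀ : H →L[ℂ] H}

lemma ampVec_comp_Q (f : EuclideanSpace ℂ ν →L[ℂ] H) :
    ampVec (μ := μ) (Q₀.comp f) = (Qhat μ Q₀).comp (ampVec f) := by
  refine ContinuousLinearMap.ext fun u => pilp_ext fun p => ?_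
  rw [ampVec_apply]
  show Q₀ (f (restrL μ ν p u)) = (Qhat μ Q₀ (ampVec f u)) p
  rw [Qhat_apply, ampVec_apply]

lemma sumAmp_apply (Z : Fin d → Matrix (μ × ν) (μ × ν) ℂ) (x : PiLp 2 (fun _ : μ => H))
    (p : μ) :
    (∑ j, amp (A j) (Z j)) x p = ∑ j, ∑ q, A j (blk (Z j) p q) (x q) := by
  rw [ContinuousLinearMap.sum_apply, pilp_sum_apply]
  exact Finset.sum_congr rfl fun j _ => amp_apply (A j) (Z j) x p

lemma sumAmp_comp_eq (Z : Fin d → Matrix (μ × ν) (μ × ν) ℂ) (x : PiLp 2 (fun _ : μ => H)) :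
    (∑ j, amp (fun G => Q₀.comp ((A j G).comp Q₀)) (Z j)) x =
      Qhat μ Q₀ ((∑ j, amp (A j) (Z j)) (Qhat μ Q₀ x)) := by
  refine pilp_ext fun p => ?_
  rw [Qhat_apply, sumAmp_apply, sumAmp_apply, map_sum]
  refine Finset.sum_congr rfl fun j _ => ?_
  rw [map_sum]
  refine Finset.sum_congr rfl fun q _ => ?_
  show Q₀ (A j (blk (Z j) p q) (Q₀ (x q))) = Q₀ (A j (blk (Z j) p q) (Qhat μ Q₀ x q))
  rw [Qhat_apply]

variable (hQidem : Q₀.comp Q₀ = Q₀) (hQsa : IsSelfAdjoint Q₀)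
  (hQran : LinearMap.range (Q₀ : H →ₗ[ℂ] H) =
    ctrlSpace A c ⊓ (ctrlSpace A c ⊓ (obsSpace A b)ᗮ)ᗮ)
include hQidem hQsa hQran

lemma sumAmp_ctrl (Z : Fin d → Matrix (μ × ν) (μ × ν) ℂ) (x : PiLp 2 (fun _ : μ => H))
    (hx : ∀ q, x q ∈ ctrlSpace A c) (p : μ) :
    (∑ j, amp (A j) (Z j)) x p ∈ ctrlSpace A c := by
  rw [sumAmp_apply]
  refine Submodule.sum_mem _ fun j _ => Submodule.sum_mem _ fun q _ => ?_
  exact ctrl_invariant j _ _ (hx q)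

lemma sumAmp_QSQ (Z : Fin d → Matrix (μ × ν) (μ × ν) ℂ) (x : PiLp 2 (fun _ : μ => H))
    (hx : ∀ q, x q ∈ ctrlSpace A c) :
    Qhat μ Q₀ ((∑ j, amp (A j) (Z j)) (Qhat μ Q₀ x)) =
      Qhat μ Q₀ ((∑ j, amp (A j) (Z j)) x) := by
  refine pilp_ext fun p => ?_
  rw [Qhat_apply, Qhat_apply, sumAmp_apply, sumAmp_apply, map_sum, map_sum]
  refine Finset.sum_congr rfl fun j _ => ?_
  rw [map_sum, map_sum]
  refine Finset.sum_congr rfl fun q _ => ?_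
  have h1 : Qhat μ Q₀ x q = Q₀ (x q) := Qhat_apply Q₀ x q
  rw [h1]
  exact (key_ctrl hQidem hQsa hQran j _ _ (hx q)).symm

lemma Spow_ctrl (Z : Fin d → Matrix (μ × ν) (μ × ν) ℂ) (x : PiLp 2 (fun _ : μ => H))
    (hx : ∀ q, x q ∈ ctrlSpace A c) (k : ℕ) (p : μ) :
    ((∑ j, amp (A j) (Z j)) ^ k) x p ∈ ctrlSpace A c := by
  induction k generalizing p with
  | zero => rw [pow_zero]; exact hx p
  | succ k ih =>
    have h1 : ((∑ j, amp (A j) (Z j)) ^ (k + 1)) x =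
        (∑ j, amp (A j) (Z j)) (((∑ j, amp (A j) (Z j)) ^ k) x) := by
      rw [pow_succ']; rfl
    rw [h1]
    exact sumAmp_ctrl hQidem hQsa hQran Z _ (fun q => ih q) p

lemma Spow_compress (Z : Fin d → Matrix (μ × ν) (μ × ν) ℂ) (x : PiLp 2 (fun _ : μ => H))
    (hx : ∀ q, x q ∈ ctrlSpace A c) (k : ℕ) :
    ((∑ j, amp (fun G => Q₀.comp ((A j G).comp Q₀)) (Z j)) ^ k) (Qhat μ Q₀ x) =
      Qhat μ Q₀ (((∑ j, amp (A j) (Z j)) ^ k) x) := by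
  induction k with
  | zero => rw [pow_zero, pow_zero]; rfl
  | succ k ih =>
    have h1 : ((∑ j, amp (fun G => Q₀.comp ((A j G).comp Q₀)) (Z j)) ^ (k + 1))
        (Qhat μ Q₀ x) = (∑ j, amp (fun G => Q₀.comp ((A j G).comp Q₀)) (Z j))
          (((∑ j, amp (fun G => Q₀.comp ((A j G).comp Q₀)) (Z j)) ^ k) (Qhat μ Q₀ x)) := by
      rw [pow_succ']; rfl
    have h2 : ((∑ j, amp (A j) (Z j)) ^ (k + 1)) x =
        (∑ j, amp (A j) (Z j)) (((∑ j, amp (A j) (Z j)) ^ k) x) := by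
      rw [pow_succ']; rfl
    rw [h1, ih, h2, sumAmp_comp_eq, Qhat_idem hQidem]
    exact sumAmp_QSQ hQidem hQsa hQran Z _ fun q => Spow_ctrl hQidem hQsa hQran Z x hx k q

omit hQidem hQsa hQran in
lemma adjoint_ampVec_orth (z : PiLp 2 (fun _ : μ => H))
    (hz : ∀ p, z p ∈ (obsSpace A b)ᗮ) :
    ContinuousLinearMap.adjoint (ampVec (μ := μ) b) z = 0 := by
  refine ext_inner_left ℂ fun u' => ?_
  rw [ContinuousLinearMap.adjoint_inner_right, inner_zero_right, PiLp.inner_apply]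
  refine Finset.sum_eq_zero fun p _ => ?_
  rw [ampVec_apply]
  exact (Submodule.mem_orthogonal _ _).1 (hz p) _ (bu_mem_obs _)

end AnalyticPart

section Final
variable {d n : ℕ}
variable {Y : Fin d → Matrix (Fin n) (Fin n) ℂ}
variable {A : Fin d → Matrix (Fin n) (Fin n) ℂ → (H →L[ℂ] H)}
variable {b c : EuclideanSpace ℂ (Fin n) →L[ℂ] H}
variable {Q₀ : H →L[ℂ] H}

lemma analytic_equiv (hA : ∀ j, IsLinearMap ℂ (A j))
    (hQidem : Q₀.comp Q₀ = Q₀) (hQsa : IsSelfAdjoint Q₀)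
    (hQran : LinearMap.range (Q₀ : H →ₗ[ℂ] H) =
      ctrlSpace A c ⊓ (ctrlSpace A c ⊓ (obsSpace A b)ᗮ)ᗮ) :
    AnalyticEquiv (fun j G => Q₀.comp ((A j G).comp Q₀)) (Q₀.comp b) (Q₀.comp c)
      A b c Y := by
  classical
  have hA0lin : ∀ j, IsLinearMap ℂ (fun G => Q₀.comp ((A j G).comp Q₀)) := by
    intro j
    constructor
    · intro G G'
      show Q₀.comp ((A j (G + G')).comp Q₀) = _
      rw [(hA j).map_add]
      ext x
      simp
    · intro s G
      show Q₀.comp ((A j (s • G)).comp Q₀) = _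
      rw [(hA j).map_smul]
      ext x
      simp
  set KA : ℝ := ∑ j, ∑ k, ∑ l, ‖A j (Matrix.single k l 1)‖ with hKA
  set KB : ℝ :=
    ∑ j, ∑ k, ∑ l, ‖Q₀.comp ((A j (Matrix.single k l 1)).comp Q₀)‖ with hKB
  have hKAnn : 0 ≤ KA := by positivity
  have hKBnn : 0 ≤ KB := by positivity
  set K : ℝ := KA + KB with hK
  have hKnn : 0 ≤ K := by positivity
  refine ⟨1 / (K + 1), by positivity, ?_⟩
  intro m hm X hX
  set Z : Fin d → Matrix (Fin m × Fin n) (Fin m × Fin n) ℂ :=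
    fun j => X j - oneKron (Fin m) (Y j) with hZ
  have hcol : 0 ≤ colNorm Z := norm_nonneg _
  set S : PiLp 2 (fun _ : Fin m => H) →L[ℂ] PiLp 2 (fun _ : Fin m => H) :=
    ∑ j, amp (A j) (Z j) with hS
  set S0 : PiLp 2 (fun _ : Fin m => H) →L[ℂ] PiLp 2 (fun _ : Fin m => H) :=
    ∑ j, amp (fun G => Q₀.comp ((A j G).comp Q₀)) (Z j) with hS0
  have hbig : ∀ (C : ℝ), 0 ≤ C → C ≤ K → C * colNorm Z < 1 := by
    intro C hC hCK
    have h3 : C * colNorm Z ≤ K * colNorm Z := mul_le_mul_of_nonneg_right hCK hcol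
    have h4 : K * colNorm Z ≤ K * (1 / (K + 1)) :=
      mul_le_mul_of_nonneg_left (le_of_lt hX) hKnn
    have h5 : K * (1 / (K + 1)) < 1 := by
      rw [mul_one_div, div_lt_one (by linarith)]
      linarith
    exact lt_of_le_of_lt (le_trans h3 h4) h5
  have hSn : ‖S‖ < 1 := by
    have h1 : ‖S‖ ≤ KA * colNorm Z := pencilSum_norm_le A hA Z
    have h2 : KA * colNorm Z < 1 := hbig KA hKAnn (by rw [hK]; linarith)
    linarith
  have hS0n : ‖S0‖ < 1 := by
    have h1 : ‖S0‖ ≤ KB * colNorm Z :=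
      pencilSum_norm_le (fun j G => Q₀.comp ((A j G).comp Q₀)) hA0lin Z
    have h2 : KB * colNorm Z < 1 := hbig KB hKBnn (by rw [hK]; linarith)
    linarith
  have hunit : IsUnit (pencil A Z) := isUnit_one_sub_of_norm_lt_one hSn
  have hunit0 : IsUnit (pencil (fun j G => Q₀.comp ((A j G).comp Q₀)) Z) :=
    isUnit_one_sub_of_norm_lt_one hS0n
  refine ⟨hunit0, hunit, ?_⟩
  have hsum : Summable (fun k : ℕ => S ^ k) := summable_geometric_of_norm_lt_one hSn
  have hsum0 : Summable (fun k : ℕ => S0 ^ k) := summable_geometric_of_norm_lt_one hS0n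
  have hinv : Ring.inverse (pencil A Z) = ∑' k : ℕ, S ^ k :=
    (geom_series_eq_inverse S hSn).symm
  have hinv0 : Ring.inverse (pencil (fun j G => Q₀.comp ((A j G).comp Q₀)) Z) =
      ∑' k : ℕ, S0 ^ k :=
    (geom_series_eq_inverse S0 hS0n).symm
  refine ContinuousLinearMap.ext fun u => ?_
  show ContinuousLinearMap.adjoint (ampVec (μ := Fin m) (Q₀.comp b))
      ((Ring.inverse (pencil (fun j G => Q₀.comp ((A j G).comp Q₀)) Z))
        (ampVec (Q₀.comp c) u)) =
    ContinuousLinearMap.adjoint (ampVec (μ := Fin m) b)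
      ((Ring.inverse (pencil A Z)) (ampVec c u))
  rw [hinv, hinv0]
  have hc0 : ampVec (μ := Fin m) (Q₀.comp c) u = Qhat (Fin m) Q₀ (ampVec c u) := by
    rw [ampVec_comp_Q]; rfl
  have hb0 : ContinuousLinearMap.adjoint (ampVec (μ := Fin m) (Q₀.comp b)) =
      (ContinuousLinearMap.adjoint (ampVec (μ := Fin m) b)).comp (Qhat (Fin m) Q₀) := by
    rw [ampVec_comp_Q (Q₀ := Q₀) b, ContinuousLinearMap.adjoint_comp, Qhat_adjoint hQsa]
  rw [hc0, hb0]
  have happ0 : (∑' k : ℕ, S0 ^ k) (Qhat (Fin m) Q₀ (ampVec c u)) =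
      ∑' k : ℕ, (S0 ^ k) (Qhat (Fin m) Q₀ (ampVec c u)) :=
    ContinuousLinearMap.map_tsum
      (ContinuousLinearMap.apply ℂ _ (Qhat (Fin m) Q₀ (ampVec c u))) hsum0
  have happ : (∑' k : ℕ, S ^ k) (ampVec c u) = ∑' k : ℕ, (S ^ k) (ampVec c u) :=
    ContinuousLinearMap.map_tsum (ContinuousLinearMap.apply ℂ _ (ampVec c u)) hsum
  rw [happ0, happ]
  have hsv0 : Summable (fun k : ℕ => (S0 ^ k) (Qhat (Fin m) Q₀ (ampVec c u))) :=
    hsum0.mapL (ContinuousLinearMap.apply ℂ _ (Qhat (Fin m) Q₀ (ampVec c u)))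
  have hsv : Summable (fun k : ℕ => (S ^ k) (ampVec c u)) :=
    hsum.mapL (ContinuousLinearMap.apply ℂ _ (ampVec c u))
  rw [ContinuousLinearMap.map_tsum
    ((ContinuousLinearMap.adjoint (ampVec (μ := Fin m) b)).comp (Qhat (Fin m) Q₀)) hsv0]
  rw [ContinuousLinearMap.map_tsum
    (ContinuousLinearMap.adjoint (ampVec (μ := Fin m) b)) hsv]
  refine tsum_congr fun k => ?_
  -- termwise equality of moments
  have hcc : ∀ q, ampVec (μ := Fin m) c u q ∈ ctrlSpace A c := by
    intro q
    rw [ampVec_apply]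
    exact cv_mem_ctrl _
  have hp := Spow_compress hQidem hQsa hQran Z (ampVec c u) hcc k
  show ContinuousLinearMap.adjoint (ampVec (μ := Fin m) b)
      (Qhat (Fin m) Q₀ ((S0 ^ k) (Qhat (Fin m) Q₀ (ampVec c u)))) = _
  rw [hp, Qhat_idem hQidem]
  have horth : ContinuousLinearMap.adjoint (ampVec (μ := Fin m) b)
      ((S ^ k) (ampVec c u) - Qhat (Fin m) Q₀ ((S ^ k) (ampVec c u))) = 0 := by
    refine adjoint_ampVec_orth (A := A) _ fun p => ?_
    have h5 : ((S ^ k) (ampVec c u) - Qhat (Fin m) Q₀ ((S ^ k) (ampVec c u))) p =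
        (S ^ k) (ampVec c u) p - Q₀ ((S ^ k) (ampVec c u) p) := by
      have h6 : ((S ^ k) (ampVec c u) - Qhat (Fin m) Q₀ ((S ^ k) (ampVec c u))) p =
          (S ^ k) (ampVec c u) p - (Qhat (Fin m) Q₀ ((S ^ k) (ampVec c u))) p := rfl
      rw [h6, Qhat_apply]
    rw [h5]
    exact (sub_mem_N hQidem hQsa hQran _
      (Spow_ctrl hQidem hQsa hQran Z _ hcc k p)).2
  rw [map_sub, sub_eq_zero] at horth
  exact horth.symm

end Final

/-- **Kalman decomposition.** Compressing a matrix-centre realization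
`(A,b,c)` at `Y` to the minimal subspace `M = C_{A,c} ⊖ (C_{A,c} ∩ O_{A†,b}^⊥)` (by the
orthogonal projection `Q₀` onto `M`) produces a minimal realization with the same moments;
in particular the compression is analytically equivalent to `(A,b,c)` at `Y`. -/
theorem kalman_decomposition
    {d n : ℕ} (Y : Fin d → Matrix (Fin n) (Fin n) ℂ)
    (A : Fin d → Matrix (Fin n) (Fin n) ℂ → (H →L[ℂ] H)) (hA : ∀ j, IsLinearMap ℂ (A j))
    (b c : EuclideanSpace ℂ (Fin n) →L[ℂ] H)
    (Q₀ : H →L[ℂ] H) (hQidem : Q₀.comp Q₀ = Q₀) (hQsa : IsSelfAdjoint Q₀)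
    (hQran : LinearMap.range (Q₀ : H →ₗ[ℂ] H) =
      ctrlSpace A c ⊓ (ctrlSpace A c ⊓ (obsSpace A b)ᗮ)ᗮ) :
    ctrlSpace (fun j G => Q₀.comp ((A j G).comp Q₀)) (Q₀.comp c) =
        ctrlSpace A c ⊓ (ctrlSpace A c ⊓ (obsSpace A b)ᗮ)ᗮ ∧
    obsSpace (fun j G => Q₀.comp ((A j G).comp Q₀)) (Q₀.comp b) =
        ctrlSpace A c ⊓ (ctrlSpace A c ⊓ (obsSpace A b)ᗮ)ᗮ ∧
    (∀ l : List (Fin d × Matrix (Fin n) (Fin n) ℂ),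
      (ContinuousLinearMap.adjoint (Q₀.comp b)).comp
          ((wordOp (fun j G => Q₀.comp ((A j G).comp Q₀)) l).comp (Q₀.comp c)) =
        (ContinuousLinearMap.adjoint b).comp ((wordOp A l).comp c)) ∧
    AnalyticEquiv (fun j G => Q₀.comp ((A j G).comp Q₀)) (Q₀.comp b) (Q₀.comp c)
      A b c Y :=
  ⟨ctrl_comp_eq hQidem hQsa hQran, obs_comp_eq hQidem hQsa hQran,
    fun l => moments_eq hQidem hQsa hQran l, analytic_equiv hA hQidem hQsa hQran⟩

end MC
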